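/- arXiv:2404.13136 — 2 statements merged into one kernel-verified Lean document; each statement's English description precedes it below -/
import Mathlib

section
/- If γ is the unique positive real root of x^4 + x^3 = x^2 + 2 and λ' = γ + 1/γ, then λ* < λ' < 95/47, where λ* = √ρ + 1/√ρ with ρ the unique real root of x^3 = x + 1. -/
/-! Both `λ*` and `λ'` are values of `t ↦ t + 1/t`, which is strictly increasing on `[1, ∞)`.
Since `ρ < 1.325 < 1.152² < γ²`, we get `1 ≤ √ρ < γ`, hence `λ* < λ'`; and `γ < 1.1568` gives
`λ' < 1.1568 + 1/1.1568 < 95/47`. -/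

lemma strictMonoOn_add_one_div : StrictMonoOn (fun t : ℝ => t + 1 / t) (Set.Ici 1) := by
  intro s (hs : 1 ≤ s) t (ht : 1 ≤ t) hst
  have hs0 : 0 < s := by linarith
  have ht0 : 0 < t := by linarith
  have key : t + 1 / t - (s + 1 / s) = (t - s) * (s * t - 1) / (s * t) := by
    field_simp
    ring
  have : 0 < (t - s) * (s * t - 1) / (s * t) :=
    div_pos (mul_pos (by linarith) (by nlinarith)) (by positivity)
  show s + 1 / s < t + 1 / t
  linarith

lemma bounds_of_quartic_eq {γ : ℝ} (hγpos : 0 < γ) (hγ : γ ^ 4 + γ ^ 3 = γ ^ 2 + 2) :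
    1.152 < γ ∧ γ < 1.1568 := by
  constructor
  · nlinarith [pow_pos hγpos 3, pow_pos hγpos 2, sq_nonneg (γ - 1.152)]
  · nlinarith [pow_pos hγpos 3, pow_pos hγpos 2, sq_nonneg (γ - 1.1568)]

lemma bounds_of_cubic_eq {ρ : ℝ} (hρ : ρ ^ 3 = ρ + 1) : 1 < ρ ∧ ρ < 1.325 := by
  constructor
  · nlinarith [sq_nonneg (ρ - 1), sq_nonneg (ρ + 1), sq_nonneg (ρ + 1 / 2), sq_nonneg ρ]
  · nlinarith [sq_nonneg (ρ - 1.325), sq_nonneg (ρ + 1.325)]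

/-- If `γ` is the unique positive real root of `x⁴ + x³ = x² + 2` and `λ' = γ + 1/γ`, then
`λ* < λ' < 95/47`, where `λ* = √ρ + 1/√ρ` with `ρ` the unique real root of `x³ = x + 1`. -/
theorem stmt2 (γ ρ : ℝ) (hγpos : 0 < γ) (hγ : γ ^ 4 + γ ^ 3 = γ ^ 2 + 2)
    (hρ : ρ ^ 3 = ρ + 1) :
    Real.sqrt ρ + 1 / Real.sqrt ρ < γ + 1 / γ ∧ γ + 1 / γ < 95 / 47 := by
  obtain ⟨hγlo, hγhi⟩ := bounds_of_quartic_eq hγpos hγ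
  obtain ⟨hρlo, hρhi⟩ := bounds_of_cubic_eq hρ
  have hγ1 : (1 : ℝ) ≤ γ := by linarith
  have hsqrt1 : 1 ≤ Real.sqrt ρ := Real.one_le_sqrt.mpr hρlo.le
  have hsqrtγ : Real.sqrt ρ < γ := (Real.sqrt_lt' hγpos).mpr (by nlinarith)
  refine ⟨strictMonoOn_add_one_div hsqrt1 hγ1 hsqrtγ, ?_⟩
  calc γ + 1 / γ < 1.1568 + 1 / 1.1568 :=
        strictMonoOn_add_one_div hγ1 (by norm_num : (1 : ℝ) ≤ 1.1568) hγhi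
    _ < 95 / 47 := by norm_num
end

section
/- Let F_R be a rooted graph and ℓ ∈ ℕ. If the smallest adjacency eigenvalue of the augmented path extension Λ(F_R, ℓ) is less than −2, then the smallest adjacency eigenvalue of Λ(F_R, ℓ+1) is also less than −2. -/
open Matrix Filter
open scoped Classical

noncomputable def adjM {α : Type*} [Fintype α] (G : SimpleGraph α) : Matrix α α ℝ :=
  fun x y => if G.Adj x y then 1 else 0

noncomputable def minEig {α : Type*} [Fintype α] (G : SimpleGraph α) : ℝ :=
  sInf {μ : ℝ | ∃ x : α → ℝ, x ≠ 0 ∧ adjM G *ᵥ x = μ • x}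

/-- The augmented path extension `Λ(F_R, ℓ)`: to the disjoint union of `F` and the gadget
with vertices `a = 0`, `b = 1`, `c = 2` (roots `a`, `b`, edge `a–c`), add a path
`v_0 … v_ℓ` (vertices `Fin (ℓ+1)`), joining `v_0` to every vertex of `R` and `v_ℓ` to the
two roots `a`, `b` of the gadget. -/
def ape {V : Type*} (F : SimpleGraph V) (R : Set V) (ℓ : ℕ) :
    SimpleGraph (V ⊕ Fin (ℓ + 1) ⊕ Fin 3) :=
  SimpleGraph.fromRel (fun x y =>
    match x, y with
    | Sum.inl u, Sum.inl v => F.Adj u v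
    | Sum.inl u, Sum.inr (Sum.inl i) => u ∈ R ∧ (i : ℕ) = 0
    | Sum.inr (Sum.inl i), Sum.inr (Sum.inl j) => (j : ℕ) = (i : ℕ) + 1
    | Sum.inr (Sum.inl i), Sum.inr (Sum.inr g) => (i : ℕ) = ℓ ∧ (g = 0 ∨ g = 1)
    | Sum.inr (Sum.inr g), Sum.inr (Sum.inr h) => g = 0 ∧ h = 2
    | _, _ => False)

/-! The smallest adjacency eigenvalue is the minimum of the Rayleigh quotient `xᵀAx / xᵀx`, so it
is `< -2` exactly when some `x` has `xᵀAx < -2 xᵀx`. Given such an `x` on `Λ(F_R, ℓ)`, negate it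
on `F` and put a new path vertex carrying `-x(v₀)` between `R` and `v₀`: the products along the
edges of `F` and along the edges from `R` to the path do not change, the new edge contributes
`-2 x(v₀)²` and `xᵀx` grows by `x(v₀)²`, so the strict inequality survives on `Λ(F_R, ℓ+1)`. -/

lemma dotProduct_self_pos {n : Type*} [Fintype n] {x : n → ℝ} (hx : x ≠ 0) : 0 < x ⬝ᵥ x := by
  simpa using dotProduct_self_star_pos_iff.mpr hx

theorem Matrix.IsHermitian.exists_eigenvalue_mul_dotProduct_self_le {n : Type*} [Fintype n]
    [DecidableEq n] [Nonempty n] {A : Matrix n n ℝ} (hA : A.IsHermitian) :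
    ∃ μ : ℝ, (∃ v ≠ 0, A *ᵥ v = μ • v) ∧ ∀ x, μ * (x ⬝ᵥ x) ≤ x ⬝ᵥ A *ᵥ x := by
  set T := toEuclideanLin A
  have inner_eq (x : n → ℝ) : inner ℝ (T (WithLp.toLp 2 x)) (WithLp.toLp 2 x) = x ⬝ᵥ A *ᵥ x := by
    simp [T, EuclideanSpace.inner_eq_star_dotProduct]
  have norm_sq_eq (x : n → ℝ) : ‖WithLp.toLp 2 x‖ ^ 2 = x ⬝ᵥ x := by
    rw [← real_inner_self_eq_norm_sq, EuclideanSpace.inner_eq_star_dotProduct]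
    simp
  obtain ⟨v, hv⟩ := (isSymmetric_toEuclideanLin_iff.mpr hA).hasEigenvalue_iInf_of_finiteDimensional
    |>.exists_hasEigenvector
  refine ⟨_, ⟨v.ofLp, by simpa using hv.2, congrArg WithLp.ofLp hv.apply_eq_smul⟩, fun x => ?_⟩
  rcases eq_or_ne x 0 with rfl | hx
  · simp
  have hbdd : BddBelow (Set.range fun y : {y : EuclideanSpace ℝ n // y ≠ 0} =>
      RCLike.re (inner ℝ (T y) y) / ‖(y : EuclideanSpace ℝ n)‖ ^ 2) :=
    ⟨-‖LinearMap.toContinuousLinearMap T‖, Set.forall_mem_range.mpr fun y =>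
      (abs_le.mp ((LinearMap.toContinuousLinearMap T).rayleighQuotient_le_norm y)).1⟩
  have := ciInf_le hbdd ⟨WithLp.toLp 2 x, by simpa using hx⟩
  rwa [RCLike.re_to_real, inner_eq, norm_sq_eq, le_div_iff₀ (dotProduct_self_pos hx)] at this

lemma adjM_isHermitian {α : Type*} [Fintype α] (G : SimpleGraph α) : (adjM G).IsHermitian := by
  ext p q
  simp [adjM, G.adj_comm]

lemma minEig_lt_iff {α : Type*} [Fintype α] [Nonempty α] (G : SimpleGraph α) (c : ℝ) :
    minEig G < c ↔ ∃ x, x ⬝ᵥ adjM G *ᵥ x < c * (x ⬝ᵥ x) := by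
  obtain ⟨μ, ⟨v, hv0, hv⟩, hle⟩ := (adjM_isHermitian G).exists_eigenvalue_mul_dotProduct_self_le
  have hmin : minEig G = μ := by
    refine IsLeast.csInf_eq ⟨⟨v, hv0, hv⟩, ?_⟩
    rintro μ' ⟨w, hw0, hw⟩
    have := hle w
    rw [hw, dotProduct_smul, smul_eq_mul] at this
    exact le_of_mul_le_mul_right this (dotProduct_self_pos hw0)
  rw [hmin]
  constructor
  · intro h
    refine ⟨v, ?_⟩
    rw [hv, dotProduct_smul, smul_eq_mul]
    exact mul_lt_mul_of_pos_right h (dotProduct_self_pos hv0)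
  · rintro ⟨x, hx⟩
    exact lt_of_mul_lt_mul_right ((hle x).trans_lt hx) (dotProduct_self_star_nonneg x)

section PathGraph
open SimpleGraph

variable {n : ℕ}

@[simp] lemma pathGraph_adj_succ_succ {i j : Fin n} :
    (pathGraph (n + 1)).Adj i.succ j.succ ↔ (pathGraph n).Adj i j := by
  simp [pathGraph_adj]

@[simp] lemma pathGraph_adj_zero_succ {j : Fin (n + 1)} :
    (pathGraph (n + 2)).Adj 0 j.succ ↔ j = 0 := by
  simp only [pathGraph_adj, Fin.val_zero, Fin.val_succ, Fin.ext_iff (a := j)]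
  omega

@[simp] lemma pathGraph_adj_succ_zero {j : Fin (n + 1)} :
    (pathGraph (n + 2)).Adj j.succ 0 ↔ j = 0 :=
  adj_comm _ _ _ |>.trans pathGraph_adj_zero_succ

lemma dotProduct_adjM_pathGraph_mulVec_cons (t : ℝ) (b : Fin (n + 1) → ℝ) :
    vecCons t b ⬝ᵥ adjM (pathGraph (n + 2)) *ᵥ vecCons t b =
      2 * t * b 0 + b ⬝ᵥ adjM (pathGraph (n + 1)) *ᵥ b := by
  simp only [dotProduct, mulVec, adjM, ite_mul, one_mul, zero_mul, Fin.sum_univ_succ (n := n + 1),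
    cons_val_zero, cons_val_succ, mul_add, mul_ite, mul_zero, Finset.mul_sum, SimpleGraph.irrefl,
    ↓reduceIte, pathGraph_adj_zero_succ, pathGraph_adj_succ_zero, pathGraph_adj_succ_succ,
    Finset.sum_ite_eq', Finset.mem_univ, Finset.sum_add_distrib]
  ring

end PathGraph

section Ape

variable {V : Type*} {F : SimpleGraph V} {R : Set V} {ℓ : ℕ}

@[simp] lemma ape_adj_inl_inl {u v : V} : (ape F R ℓ).Adj (.inl u) (.inl v) ↔ F.Adj u v := by
  simpa [ape, F.adj_comm v u] using fun h => h.ne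

@[simp] lemma ape_adj_inl_path {u : V} {i : Fin (ℓ + 1)} :
    (ape F R ℓ).Adj (.inl u) (.inr (.inl i)) ↔ u ∈ R ∧ i = 0 := by
  simp [ape]

@[simp] lemma ape_adj_path_inl {u : V} {i : Fin (ℓ + 1)} :
    (ape F R ℓ).Adj (.inr (.inl i)) (.inl u) ↔ i = 0 ∧ u ∈ R :=
  SimpleGraph.adj_comm _ _ _ |>.trans <| ape_adj_inl_path.trans and_comm

@[simp] lemma ape_adj_path_path {i j : Fin (ℓ + 1)} :
    (ape F R ℓ).Adj (.inr (.inl i)) (.inr (.inl j)) ↔ (SimpleGraph.pathGraph (ℓ + 1)).Adj i j := by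
  simp only [ape, SimpleGraph.fromRel_adj, ne_eq, Sum.inr.injEq, Sum.inl.injEq,
    Fin.ext_iff (a := i), SimpleGraph.pathGraph_adj]
  omega

@[simp] lemma ape_adj_path_gadget {i : Fin (ℓ + 1)} {g : Fin 3} :
    (ape F R ℓ).Adj (.inr (.inl i)) (.inr (.inr g)) ↔ i = Fin.last ℓ ∧ (g = 0 ∨ g = 1) := by
  simp [ape, Fin.ext_iff (a := i)]

@[simp] lemma ape_adj_gadget_path {i : Fin (ℓ + 1)} {g : Fin 3} :
    (ape F R ℓ).Adj (.inr (.inr g)) (.inr (.inl i)) ↔ i = Fin.last ℓ ∧ (g = 0 ∨ g = 1) :=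
  SimpleGraph.adj_comm _ _ _ |>.trans ape_adj_path_gadget

@[simp] lemma ape_not_adj_inl_gadget {u : V} {g : Fin 3} :
    ¬ (ape F R ℓ).Adj (.inl u) (.inr (.inr g)) := by
  simp [ape]

@[simp] lemma ape_not_adj_gadget_inl {u : V} {g : Fin 3} :
    ¬ (ape F R ℓ).Adj (.inr (.inr g)) (.inl u) :=
  fun h => ape_not_adj_inl_gadget h.symm

@[simp] lemma ape_adj_gadget_gadget {g h : Fin 3} :
    (ape F R ℓ).Adj (.inr (.inr g)) (.inr (.inr h)) ↔ g = 0 ∧ h = 2 ∨ g = 2 ∧ h = 0 := by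
  simp only [ape, SimpleGraph.fromRel_adj]
  fin_cases g <;> fin_cases h <;> simp

lemma dotProduct_adjM_ape_mulVec [Fintype V] (a : V → ℝ) (b : Fin (ℓ + 1) → ℝ) (c : Fin 3 → ℝ) :
    Sum.elim a (Sum.elim b c) ⬝ᵥ adjM (ape F R ℓ) *ᵥ Sum.elim a (Sum.elim b c) =
      a ⬝ᵥ adjM F *ᵥ a + 2 * (∑ u, R.indicator a u) * b 0
        + b ⬝ᵥ adjM (SimpleGraph.pathGraph (ℓ + 1)) *ᵥ b
        + 2 * b (Fin.last ℓ) * (c 0 + c 1) + 2 * c 0 * c 2 := by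
  have split_R (u : V) : (if u ∈ R then 2 * a u * b 0 else 0) =
      (if u ∈ R then b 0 * a u else 0) + if u ∈ R then a u * b 0 else 0 := by
    split_ifs <;> ring
  simp only [dotProduct, mulVec, adjM, ite_mul, one_mul, zero_mul, Fintype.sum_sum_type,
    Sum.elim_inl, Sum.elim_inr, Fin.sum_univ_three, mul_add, Finset.mul_sum, mul_ite, mul_zero,
    Finset.sum_add_distrib, ite_and, Finset.sum_ite_irrel, Finset.sum_const_zero,
    Finset.sum_ite_eq', Finset.mem_univ, ↓reduceIte, add_zero, zero_add, zero_ne_one, one_ne_zero,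
    or_false, or_true, Fin.reduceEq, or_self, and_true, and_false, false_or, Set.indicator_apply,
    Finset.sum_mul, ape_adj_inl_inl, ape_adj_inl_path, ape_adj_path_inl, ape_adj_path_path,
    ape_adj_path_gadget, ape_adj_gadget_path, ape_not_adj_inl_gadget, ape_not_adj_gadget_inl,
    ape_adj_gadget_gadget, split_R]
  ring

end Ape

theorem stmt7_general {V : Type*} [Fintype V] (F : SimpleGraph V) (R : Set V)
    (ℓ : ℕ) (h : minEig (ape F R ℓ) < -2) : minEig (ape F R (ℓ + 1)) < -2 := by
  rw [minEig_lt_iff] at h ⊢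
  obtain ⟨x, hx⟩ := h
  obtain ⟨a, b, c, rfl⟩ : ∃ a b c, x = Sum.elim a (Sum.elim b c) :=
    ⟨x ∘ .inl, x ∘ .inr ∘ .inl, x ∘ .inr ∘ .inr, by ext (_ | _ | _) <;> rfl⟩
  refine ⟨Sum.elim (-a) (Sum.elim (vecCons (-b 0) b) c), ?_⟩
  rw [dotProduct_adjM_ape_mulVec] at hx
  rw [dotProduct_adjM_ape_mulVec, dotProduct_adjM_pathGraph_mulVec_cons]
  simp only [sumElim_dotProduct_sumElim, mulVec_neg, dotProduct_neg, neg_dotProduct, neg_neg,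
    Set.indicator_neg', Pi.neg_apply, Finset.sum_neg_distrib, ← Fin.succ_last, cons_val_zero,
    cons_val_succ, cons_dotProduct_cons] at hx ⊢
  linarith

/-- If the smallest eigenvalue of the augmented path extension `Λ(F_R, ℓ)` is `< -2`,
then so is that of `Λ(F_R, ℓ+1)`. -/
theorem stmt7 {V : Type*} [Fintype V] (F : SimpleGraph V) (R : Set V) (hR : R.Nonempty)
    (ℓ : ℕ) (h : minEig (ape F R ℓ) < -2) : minEig (ape F R (ℓ + 1)) < -2 :=
  stmt7_general F R ℓ h
end
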